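/- arXiv:2007.01957 — 2 statements merged into one kernel-verified Lean document; each statement's English description precedes it below -/
import Mathlib

section
/- Let (a_p)_{p≥1} and (b_p)_{p≥1} be sequences of nonnegative real numbers indexed by natural numbers p ≥ 1 such that (a_p) converges to a real number a, and such that (b_p) is bounded with liminf_{p→∞} b_p = b. Then liminf_{p→∞} (a_p^p + b_p^p)^{1/p} = max{a, b}, where the exponent p in a_p^p + b_p^p is the same natural number as the sequence index. -/
/-!
Since `max x y ≤ (x ^ p + y ^ p) ^ (1 / p) ≤ 2 ^ (1 / p) * max x y` for `x, y ≥ 0` and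
`2 ^ (1 / p) → 1`, the sequence `(a_p ^ p + b_p ^ p) ^ (1 / p)` differs from `max a_p b_p`
by a null sequence, and so, as `a_p → a`, does it from `max a b_p`. A null perturbation of a
bounded sequence does not change its liminf, and `x ↦ max a x` is monotone and continuous,
so it commutes with liminf.
-/

open Filter Topology

lemma Filter.liminf_eq_of_tendsto_sub_nhds_zero {ι : Type*} {f : Filter ι} [f.NeBot]
    {u v : ι → ℝ} (huv : Tendsto (fun i ↦ u i - v i) f (𝓝 0))
    (hv_below : f.IsBoundedUnder (· ≥ ·) v) (hv_above : f.IsBoundedUnder (· ≤ ·) v) :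
    liminf u f = liminf v f := by
  set w := fun i ↦ u i - v i
  have hv_cobdd : f.IsCoboundedUnder (· ≥ ·) v := hv_above.isCoboundedUnder_ge
  have hu : u = w + v := funext fun i ↦ (sub_add_cancel (u i) (v i)).symm
  apply le_antisymm
  · calc liminf u f = liminf (w + v) f := by rw [← hu]
      _ ≤ limsup w f + liminf v f :=
        liminf_add_le huv.isBoundedUnder_ge huv.isBoundedUnder_le hv_below hv_cobdd
      _ = liminf v f := by rw [huv.limsup_eq, zero_add]
  · calc liminf v f = liminf w f + liminf v f := by rw [huv.liminf_eq, zero_add]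
      _ ≤ liminf (w + v) f :=
        le_liminf_add huv.isBoundedUnder_ge huv.isBoundedUnder_le hv_below hv_cobdd
      _ = liminf u f := by rw [← hu]

namespace Real

lemma le_rpow_inv_natCast_pow_add_pow {x y : ℝ} {n : ℕ} (hn : n ≠ 0) (hx : 0 ≤ x)
    (hy : 0 ≤ y) : x ≤ (x ^ n + y ^ n) ^ (n⁻¹ : ℝ) := by
  calc x = (x ^ n) ^ (n⁻¹ : ℝ) := (pow_rpow_inv_natCast hx hn).symm
    _ ≤ (x ^ n + y ^ n) ^ (n⁻¹ : ℝ) := by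
      gcongr
      exact le_add_of_nonneg_right (by positivity)

lemma max_le_rpow_inv_natCast_pow_add_pow {x y : ℝ} {n : ℕ} (hn : n ≠ 0) (hx : 0 ≤ x)
    (hy : 0 ≤ y) : max x y ≤ (x ^ n + y ^ n) ^ (n⁻¹ : ℝ) :=
  max_le (le_rpow_inv_natCast_pow_add_pow hn hx hy)
    (add_comm (x ^ n) (y ^ n) ▸ le_rpow_inv_natCast_pow_add_pow hn hy hx)

lemma rpow_inv_natCast_pow_add_pow_le {x y : ℝ} {n : ℕ} (hn : n ≠ 0) (hx : 0 ≤ x)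
    (hy : 0 ≤ y) :
    (x ^ n + y ^ n) ^ (n⁻¹ : ℝ) ≤ 2 ^ (n⁻¹ : ℝ) * max x y := by
  have hm : 0 ≤ max x y := le_max_of_le_left hx
  have hsum : x ^ n + y ^ n ≤ 2 * max x y ^ n := by
    rw [two_mul]
    gcongr
    exacts [le_max_left x y, le_max_right x y]
  calc (x ^ n + y ^ n) ^ (n⁻¹ : ℝ) ≤ (2 * max x y ^ n) ^ (n⁻¹ : ℝ) := by gcongr
    _ = 2 ^ (n⁻¹ : ℝ) * max x y := by
      rw [mul_rpow zero_le_two (by positivity), pow_rpow_inv_natCast hm hn]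

lemma tendsto_const_rpow_inv_natCast {c : ℝ} (hc : 0 < c) :
    Tendsto (fun n : ℕ ↦ c ^ (n⁻¹ : ℝ)) atTop (𝓝 1) := by
  simpa [Function.comp_def] using (continuousAt_const_rpow (b := 0) hc.ne').tendsto.comp
    (tendsto_inv_atTop_zero.comp tendsto_natCast_atTop_atTop)

lemma tendsto_rpow_inv_natCast_pow_add_pow_sub_max {x y : ℕ → ℝ}
    (hx : ∀ᶠ n in atTop, 0 ≤ x n) (hy : ∀ᶠ n in atTop, 0 ≤ y n)
    (hbdd : atTop.IsBoundedUnder (· ≤ ·) fun n ↦ max (x n) (y n)) :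
    Tendsto (fun n : ℕ ↦ (x n ^ n + y n ^ n) ^ (n⁻¹ : ℝ) - max (x n) (y n))
      atTop (𝓝 0) := by
  obtain ⟨K, hK⟩ := hbdd
  have hbound : Tendsto (fun n : ℕ ↦ (2 ^ (n⁻¹ : ℝ) - 1) * K) atTop (𝓝 0) := by
    simpa using ((tendsto_const_rpow_inv_natCast zero_lt_two).sub_const 1).mul_const K
  refine tendsto_of_tendsto_of_tendsto_of_le_of_le' tendsto_const_nhds hbound ?_ ?_
  all_goals filter_upwards [hx, hy, hK, eventually_ne_atTop 0] with n hxn hyn hKn hn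
  · exact sub_nonneg.2 (max_le_rpow_inv_natCast_pow_add_pow hn hxn hyn)
  · have hpow : 1 ≤ (2 : ℝ) ^ (n⁻¹ : ℝ) := one_le_rpow one_le_two (by positivity)
    calc (x n ^ n + y n ^ n) ^ (n⁻¹ : ℝ) - max (x n) (y n)
        ≤ 2 ^ (n⁻¹ : ℝ) * max (x n) (y n) - max (x n) (y n) := by
          gcongr; exact rpow_inv_natCast_pow_add_pow_le hn hxn hyn
      _ = (2 ^ (n⁻¹ : ℝ) - 1) * max (x n) (y n) := by ring
      _ ≤ (2 ^ (n⁻¹ : ℝ) - 1) * K := by gcongr; exact hKn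

end Real

theorem liminf_rpow_sum_pow_eq_max
    (a b : ℕ → ℝ) (A B : ℝ)
    (ha0 : ∀ p, 1 ≤ p → 0 ≤ a p) (hb0 : ∀ p, 1 ≤ p → 0 ≤ b p)
    (haA : Tendsto a atTop (nhds A))
    (hbBdd : ∃ C, ∀ p, 1 ≤ p → b p ≤ C)
    (hbB : Filter.liminf b atTop = B) :
    Filter.liminf (fun p : ℕ => (a p ^ p + b p ^ p) ^ ((p : ℝ)⁻¹)) atTop = max A B := by
  obtain ⟨C, hC⟩ := hbBdd
  have ha_nonneg : ∀ᶠ p in atTop, 0 ≤ a p := eventually_atTop.2 ⟨1, ha0⟩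
  have hb_nonneg : ∀ᶠ p in atTop, 0 ≤ b p := eventually_atTop.2 ⟨1, hb0⟩
  have hb_above : atTop.IsBoundedUnder (· ≤ ·) b := ⟨C, eventually_atTop.2 ⟨1, hC⟩⟩
  have hb_below : atTop.IsBoundedUnder (· ≥ ·) b := ⟨0, hb_nonneg⟩
  have hroot := Real.tendsto_rpow_inv_natCast_pow_add_pow_sub_max ha_nonneg hb_nonneg
    (haA.isBoundedUnder_le.sup hb_above)
  have hmax : Tendsto (fun p ↦ max (a p) (b p) - max A (b p)) atTop (𝓝 0) :=
    squeeze_zero_norm (fun p ↦ abs_max_sub_max_le_abs _ _ _)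
      (by simpa using (tendsto_sub_nhds_zero_iff.2 haA).abs)
  have hclose :
      Tendsto (fun p ↦ (a p ^ p + b p ^ p) ^ ((p : ℝ)⁻¹) - max A (b p)) atTop (𝓝 0) := by
    simpa using hroot.add hmax
  rw [liminf_eq_of_tendsto_sub_nhds_zero hclose
    (isBoundedUnder_of ⟨A, fun p ↦ le_max_left A (b p)⟩)
    (isBoundedUnder_const.sup hb_above), ← hbB]
  exact (Monotone.map_liminf_of_continuousAt (fun _ _ ↦ max_le_max_left A) b
    (continuous_const.max continuous_id).continuousAt hb_above.isCoboundedUnder_ge hb_below).symm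
end

section
/- Let n ≥ 1, let Ω ⊆ ℝⁿ be a nonempty bounded open set, and let f : ℝⁿ → ℝ be a Lipschitz function (the obstacle, whose restriction to the frontier of Ω serves as the boundary datum). Define the admissible class K = { v : ℝⁿ → ℝ : v is Lipschitz on the closure of Ω, v ≥ f on Ω, and v = f on the frontier of Ω }, and for v ∈ K let Lip(v) denote the least constant L ≥ 0 such that v is L-Lipschitz on the closure of Ω. Then K is nonempty and there exists u ∈ K such that Lip(u) ≤ Lip(v) for every v ∈ K; that is, the ∞-obstacle problem of minimizing the Lipschitz constant over the admissible class admits a solution. -/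
open scoped NNReal

/-- The least Lipschitz constant of `v` on the set `s`. -/
noncomputable def lipConstOn {n : ℕ} (s : Set (Fin n → ℝ)) (v : (Fin n → ℝ) → ℝ) : ℝ≥0 :=
  sInf {L : ℝ≥0 | LipschitzOnWith L v s}

/-- The infimum of Lipschitz constants is attained. -/
lemma lipConstOn_spec {n : ℕ} (s : Set (Fin n → ℝ)) (v : (Fin n → ℝ) → ℝ)
    (h : ∃ L : ℝ≥0, LipschitzOnWith L v s) :
    LipschitzOnWith (lipConstOn s v) v s := by
  obtain ⟨L0, hL0⟩ := h
  have hne : ({L : ℝ≥0 | LipschitzOnWith L v s}).Nonempty := ⟨L0, hL0⟩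
  rw [lipschitzOnWith_iff_dist_le_mul]
  intro x hx y hy
  have hcoe : ((lipConstOn s v : ℝ≥0) : ℝ)
      = sInf (((↑) : ℝ≥0 → ℝ) '' {L : ℝ≥0 | LipschitzOnWith L v s}) :=
    NNReal.coe_sInf _
  rcases eq_or_lt_of_le (dist_nonneg : (0:ℝ) ≤ dist x y) with hd | hd
  · have h0 := (lipschitzOnWith_iff_dist_le_mul.mp hL0) x hx y hy
    rw [← hd] at h0 ⊢
    simpa using h0
  · rw [← div_le_iff₀ hd]
    rw [hcoe]
    refine le_csInf (hne.image _) ?_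
    rintro b ⟨M, hM, rfl⟩
    rw [div_le_iff₀ hd]
    exact (lipschitzOnWith_iff_dist_le_mul.mp hM) x hx y hy

theorem infinity_obstacle_problem_has_solution
    (n : ℕ) (hn : 1 ≤ n) (Ω : Set (Fin n → ℝ))
    (hΩo : IsOpen Ω) (hΩb : Bornology.IsBounded Ω) (hΩne : Ω.Nonempty)
    (f : (Fin n → ℝ) → ℝ) (K₀ : ℝ≥0) (hf : LipschitzWith K₀ f)
    (K : Set ((Fin n → ℝ) → ℝ))
    (hK : K = {v | (∃ L : ℝ≥0, LipschitzOnWith L v (closure Ω)) ∧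
        (∀ x ∈ Ω, f x ≤ v x) ∧ (∀ x ∈ frontier Ω, v x = f x)}) :
    K.Nonempty ∧
      ∃ u ∈ K, ∀ v ∈ K, lipConstOn (closure Ω) u ≤ lipConstOn (closure Ω) v := by
  have hfK : f ∈ K := by
    rw [hK]
    exact ⟨⟨K₀, (hf.lipschitzOnWith : LipschitzOnWith K₀ f (closure Ω))⟩, fun x _ => le_refl _, fun x _ => rfl⟩
  have hKne : K.Nonempty := ⟨f, hfK⟩
  refine ⟨hKne, ?_⟩
  set s := closure Ω with hs
  have hsne : s.Nonempty := hΩne.closure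
  obtain ⟨x0, hx0⟩ := hsne
  obtain ⟨R, hR⟩ : ∃ R, ∀ y ∈ s, dist y x0 ≤ R := by
    obtain ⟨R, hR⟩ := hΩb.closure.subset_closedBall x0
    exact ⟨R, fun y hy => hR hy⟩
  set T : Set ℝ≥0 := lipConstOn s '' K with hT
  have hTne : T.Nonempty := ⟨_, f, hfK, rfl⟩
  set L : ℝ≥0 := sInf T with hL
  -- decomposition of the closure
  have hsplit : ∀ y ∈ s, y ∈ Ω ∨ y ∈ frontier Ω := by
    intro y hy
    have : s = Ω ∪ frontier Ω := closure_eq_self_union_frontier Ω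
    rw [this] at hy
    exact hy
  have hfrs : frontier Ω ⊆ s := frontier_subset_closure
  -- every competitor dominates the obstacle on the closure
  have hvf : ∀ v ∈ K, ∀ y ∈ s, f y ≤ v y := by
    intro v hv y hy
    rw [hK] at hv
    rcases hsplit y hy with h | h
    · exact hv.2.1 y h
    · exact (hv.2.2 y h).ge
  -- key inequality for the infimal constant L
  have hkey : ∀ x ∈ frontier Ω, ∀ y ∈ s, f y - f x ≤ (L : ℝ) * dist x y := by
    intro x hx y hy
    have hstep : ∀ v ∈ K, f y - f x ≤ (lipConstOn s v : ℝ) * dist x y := by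
      intro v hv
      have hvlip : LipschitzOnWith (lipConstOn s v) v s := by
        refine lipConstOn_spec s v ?_
        rw [hK] at hv; exact hv.1
      have h1 : f y ≤ v y := hvf v hv y hy
      have h2 : v x = f x := by rw [hK] at hv; exact hv.2.2 x hx
      have h3 : dist (v y) (v x) ≤ (lipConstOn s v : ℝ) * dist y x :=
        (lipschitzOnWith_iff_dist_le_mul.mp hvlip) y hy x (hfrs hx)
      have h4 : v y - v x ≤ dist (v y) (v x) := by
        rw [Real.dist_eq]; exact le_abs_self _
      rw [dist_comm x y]
      linarith
    rcases le_or_gt (f y - f x) 0 with h | h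
    · exact h.trans (by positivity)
    · have hd : 0 < dist x y := by
        rcases eq_or_lt_of_le (dist_nonneg : (0:ℝ) ≤ dist x y) with hd | hd
        · exfalso
          have := hstep f hfK
          rw [← hd] at this
          linarith
        · exact hd
      rw [← div_le_iff₀ hd]
      have hcoe : ((L : ℝ≥0) : ℝ) = sInf (((↑) : ℝ≥0 → ℝ) '' T) := NNReal.coe_sInf _
      rw [hcoe]
      refine le_csInf (hTne.image _) ?_
      rintro b ⟨M, ⟨v, hv, rfl⟩, rfl⟩
      rw [div_le_iff₀ hd]
      exact hstep v hv
  -- the candidate solution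
  set F : (Fin n → ℝ) → Set ℝ := fun x => (fun y => f y - (L : ℝ) * dist x y) '' s with hF
  have hFne : ∀ x, (F x).Nonempty := fun x => ⟨_, x0, hx0, rfl⟩
  have hFbdd : ∀ x, BddAbove (F x) := by
    intro x
    refine ⟨f x0 + (K₀ : ℝ) * R, ?_⟩
    rintro b ⟨y, hy, rfl⟩
    have h1 : dist (f y) (f x0) ≤ (K₀ : ℝ) * dist y x0 := hf.dist_le_mul y x0
    have h2 : f y - f x0 ≤ dist (f y) (f x0) := by
      rw [Real.dist_eq]; exact le_abs_self _
    have h3 : (K₀ : ℝ) * dist y x0 ≤ (K₀ : ℝ) * R :=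
      mul_le_mul_of_nonneg_left (hR y hy) K₀.coe_nonneg
    have h4 : (0:ℝ) ≤ (L : ℝ) * dist x y := by positivity
    show f y - (L : ℝ) * dist x y ≤ _
    linarith
  set u : (Fin n → ℝ) → ℝ := fun x => sSup (F x) with hu
  have hule : ∀ x y, y ∈ s → f y - (L : ℝ) * dist x y ≤ u x := by
    intro x y hy
    exact le_csSup (hFbdd x) ⟨y, hy, rfl⟩
  have hufge : ∀ x ∈ s, f x ≤ u x := by
    intro x hx
    have := hule x x hx
    simpa using this
  -- u is L-Lipschitz
  have hmono : ∀ x x', u x ≤ u x' + (L : ℝ) * dist x x' := by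
    intro x x'
    refine csSup_le (hFne x) ?_
    rintro b ⟨y, hy, rfl⟩
    have htri : dist x' y ≤ dist x' x + dist x y := dist_triangle x' x y
    have h1 : (L : ℝ) * dist x' y ≤ (L : ℝ) * (dist x' x + dist x y) :=
      mul_le_mul_of_nonneg_left htri L.coe_nonneg
    have h2 : f y - (L : ℝ) * dist x' y ≤ u x' := hule x' y hy
    have hsymm : dist x' x = dist x x' := dist_comm x' x
    show f y - (L : ℝ) * dist x y ≤ _
    nlinarith [L.coe_nonneg]
  have hlip : LipschitzOnWith L u s := by
    rw [lipschitzOnWith_iff_dist_le_mul]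
    intro x _ y _
    rw [Real.dist_eq, abs_sub_le_iff]
    constructor
    · have := hmono x y; linarith
    · have := hmono y x; rw [dist_comm y x] at this; linarith
  -- boundary values
  have hub : ∀ x ∈ frontier Ω, u x = f x := by
    intro x hx
    refine le_antisymm ?_ (hufge x (hfrs hx))
    refine csSup_le (hFne x) ?_
    rintro b ⟨y, hy, rfl⟩
    have := hkey x hx y hy
    show f y - (L : ℝ) * dist x y ≤ _
    linarith
  refine ⟨u, ?_, ?_⟩
  · rw [hK]
    exact ⟨⟨L, hlip⟩, fun x hx => hufge x (subset_closure hx), hub⟩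
  · intro v hv
    have h1 : lipConstOn s u ≤ L := csInf_le (OrderBot.bddBelow _) hlip
    have h2 : L ≤ lipConstOn s v := csInf_le (OrderBot.bddBelow _) ⟨v, hv, rfl⟩
    exact h1.trans h2
end
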